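/- Let n ≥ 2 and let Z be a standard Gaussian random variable. Then for all q_1,…,q_n ∈ ℕ: E[∏_{r=1}^n H_{q_r}(Z)] = (∏_{r=1}^n q_r!) · Σ_{κ = {k_{ij}} ∈ A_{q_1,…,q_n}} ∏_{1 ≤ i < j ≤ n} 1/k_{ij}!. -/

import Mathlib

open MeasureTheory ProbabilityTheory Polynomial

noncomputable section

/-- Evaluation of the probabilists' Hermite polynomial `H_q`. -/
def Hval (q : ℕ) (z : ℝ) : ℝ := Polynomial.aeval z (Polynomial.hermite q)

/-- The index set `A_{q₁,…,qₙ}` of the diagram formula: symmetric families of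
nonnegative integers `k i j` with zero diagonal and row sums `q i`. -/
def memA {n : ℕ} (q : Fin n → ℕ) (k : Fin n → Fin n → ℕ) : Prop :=
  (∀ i, k i i = 0) ∧ (∀ i j, k i j = k j i) ∧ (∀ i, (∑ j, k i j) = q i)

/-! Both sides `F q` satisfy `F 0 = 1` and `F (p + e_i) = ∑_{s ≠ i} p_s F (p - e_s)`, which
determines `F` by induction on `∑ q`. On the Gaussian side this is integration by parts,
`E[Z P(Z)] = E[P'(Z)]`, applied to `H_{m+1} = X H_m - H_m'` together with `H_m' = m H_{m-1}`.
On the diagram side, think of `k` as a multigraph with degrees `q`: removing one of the `k_is`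
edges between `i` and `s` multiplies `∏ 1/k_ij!` by `k_is`, and the edges at `i` number `q_i`. -/

open Finset Real
open scoped NNReal Nat

namespace ProbabilityTheory

lemma hasDerivAt_gaussianPDFReal (μ : ℝ) (v : ℝ≥0) (x : ℝ) :
    HasDerivAt (gaussianPDFReal μ v) (-((x - μ) / v) * gaussianPDFReal μ v x) x := by
  have hexp : HasDerivAt (fun y => -(y - μ) ^ 2 / (2 * v)) (-((x - μ) / v)) x := by
    refine ((((hasDerivAt_id' x).sub_const μ).pow 2).neg.div_const (2 * (v : ℝ))).congr_deriv ?_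
    norm_num
    ring
  rw [gaussianPDFReal_def]
  refine (hexp.exp.const_mul (√(2 * π * v))⁻¹).congr_deriv ?_
  ring

lemma integrable_gaussianReal_iff {μ : ℝ} {v : ℝ≥0} (hv : v ≠ 0) {f : ℝ → ℝ} :
    Integrable f (gaussianReal μ v) ↔ Integrable (fun x => gaussianPDFReal μ v x * f x) := by
  rw [gaussianReal_of_var_ne_zero _ hv, integrable_withDensity_iff_integrable_smul'
    (measurable_gaussianPDF μ v) (ae_of_all _ fun _ => gaussianPDF_lt_top)]
  simp [toReal_gaussianPDF]

lemma integrable_pow_gaussianReal (μ : ℝ) (v : ℝ≥0) (n : ℕ) :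
    Integrable (fun x => x ^ n) (gaussianReal μ v) := by
  refine (integrable_norm_iff (by fun_prop)).1 ?_
  simpa [norm_pow] using (memLp_id_gaussianReal' (μ := μ) (v := v) n
    (ENNReal.natCast_ne_top n)).integrable_norm_pow'

lemma integrable_eval_gaussianReal (μ : ℝ) (v : ℝ≥0) (P : ℝ[X]) :
    Integrable (fun x => P.eval x) (gaussianReal μ v) := by
  induction P using Polynomial.induction_on' with
  | add P Q hP hQ => simpa only [eval_add] using hP.fun_add hQ
  | monomial n a => simpa using (integrable_pow_gaussianReal μ v n).const_mul a

lemma integral_sub_mul_eval_gaussianReal (μ : ℝ) (v : ℝ≥0) (P : ℝ[X]) :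
    ∫ x, (x - μ) * P.eval x ∂gaussianReal μ v
      = v * ∫ x, (derivative P).eval x ∂gaussianReal μ v := by
  rcases eq_or_ne v 0 with rfl | hv
  · simp
  have hv' : (v : ℝ) ≠ 0 := by exact_mod_cast hv
  have hint : ∀ Q : ℝ[X], Integrable (fun x => gaussianPDFReal μ v x * Q.eval x) := fun Q =>
    (integrable_gaussianReal_iff hv).1 (integrable_eval_gaussianReal μ v Q)
  have hibp := integral_mul_deriv_eq_deriv_mul_of_integrable (u := fun x => P.eval x)
    (fun x _ => P.hasDerivAt x) (fun x _ => hasDerivAt_gaussianPDFReal μ v x)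
    ((hint (-(C (v : ℝ)⁻¹ * (X - C μ) * P))).congr (ae_of_all _ fun x => by simp; ring))
    ((hint (derivative P)).congr (ae_of_all _ fun x => by simp [mul_comm]))
    ((hint P).congr (ae_of_all _ fun x => by simp [mul_comm]))
  rw [integral_gaussianReal_eq_integral_smul hv, integral_gaussianReal_eq_integral_smul hv]
  calc ∫ x, gaussianPDFReal μ v x • ((x - μ) * P.eval x)
      = ∫ x, -(v : ℝ) * (P.eval x * (-((x - μ) / v) * gaussianPDFReal μ v x)) := by
        congr 1; ext x; field_simp; ring
    _ = v * ∫ x, gaussianPDFReal μ v x • (derivative P).eval x := by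
        rw [integral_const_mul, hibp]; simp [mul_comm]

end ProbabilityTheory

namespace Polynomial

theorem derivative_hermite_succ (n : ℕ) :
    derivative (hermite (n + 1)) = (n + 1) • hermite n := by
  induction n with
  | zero => simp
  | succ n ih =>
    rw [hermite_succ (n + 1), derivative_sub, derivative_mul, derivative_X, one_mul, ih,
      derivative_smul, mul_smul_comm, add_sub_assoc, ← smul_sub, ← hermite_succ,
      succ_nsmul' _ (n + 1)]

theorem derivative_hermite (n : ℕ) : derivative (hermite n) = n • hermite (n - 1) := by
  cases n with
  | zero => simp
  | succ n => exact derivative_hermite_succ n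

end Polynomial

namespace DiagramFormula

def gaussianExpectation : ℤ[X] →+ ℝ where
  toFun P := ∫ z, aeval z P ∂gaussianReal 0 1
  map_zero' := by simp
  map_add' P Q := by
    simp only [map_add, ← eval_map_algebraMap]
    exact integral_add (integrable_eval_gaussianReal 0 1 _) (integrable_eval_gaussianReal 0 1 _)

lemma gaussianExpectation_apply (P : ℤ[X]) :
    gaussianExpectation P = ∫ z, aeval z P ∂gaussianReal 0 1 := rfl

lemma gaussianExpectation_one : gaussianExpectation 1 = 1 := by
  simp [gaussianExpectation_apply]

lemma gaussianExpectation_X_mul (P : ℤ[X]) :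
    gaussianExpectation (X * P) = gaussianExpectation (derivative P) := by
  simpa [gaussianExpectation_apply, ← eval_map_algebraMap, derivative_map]
    using integral_sub_mul_eval_gaussianReal 0 1 (P.map (algebraMap ℤ ℝ))

lemma exists_eq_add_single {ι : Type*} [DecidableEq ι] {p : ι → ℕ} {i : ι}
    (hi : p i ≠ 0) :
    ∃ r : ι → ℕ, p = r + Pi.single i 1 := by
  refine ⟨p - Pi.single i 1, (tsub_add_cancel_of_le fun j => ?_).symm⟩
  rcases eq_or_ne j i with rfl | hj
  · simpa [Nat.one_le_iff_ne_zero] using hi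
  · simp [hj]

section MultiIndex

variable {ι : Type*} [Fintype ι] [DecidableEq ι]

lemma prod_apply_add_single {M : Type*} [CommMonoid M] (f : ℕ → M) (p : ι → ℕ) (i : ι)
    (c : ℕ) :
    ∏ r, f ((p + Pi.single i c : ι → ℕ) r)
      = f (p i + c) * ∏ r ∈ univ.erase i, f (p r) := by
  rw [← mul_prod_erase univ _ (mem_univ i)]
  simp only [Pi.add_apply, Pi.single_eq_same]
  congr 1
  exact prod_congr rfl fun r hr => by rw [Pi.single_eq_of_ne (ne_of_mem_erase hr), add_zero]

lemma prod_apply_sub_single {M : Type*} [CommMonoid M] (f : ℕ → M) (p : ι → ℕ) (i : ι)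
    (c : ℕ) :
    ∏ r, f ((p - Pi.single i c : ι → ℕ) r)
      = f (p i - c) * ∏ r ∈ univ.erase i, f (p r) := by
  rw [← mul_prod_erase univ _ (mem_univ i)]
  simp only [Pi.sub_apply, Pi.single_eq_same]
  congr 1
  exact prod_congr rfl fun r hr => by rw [Pi.single_eq_of_ne (ne_of_mem_erase hr), tsub_zero]

def hermiteProd (p : ι → ℕ) : ℤ[X] :=
  ∏ r, hermite (p r)

lemma hermiteProd_add_single (p : ι → ℕ) (i : ι) :
    hermiteProd (p + Pi.single i 1)
      = X * hermiteProd p - p i • hermiteProd (p - Pi.single i 1) := by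
  rw [hermiteProd, hermiteProd, hermiteProd, prod_apply_add_single, prod_apply_sub_single,
    ← mul_prod_erase univ _ (mem_univ i),
    hermite_succ, derivative_hermite, sub_mul, mul_assoc, smul_mul_assoc]

lemma prod_factorial_add_single (p : ι → ℕ) (i : ι) :
    ∏ r, ((p + Pi.single i 1 : ι → ℕ) r)! = (p i + 1) * ∏ r, (p r)! := by
  rw [prod_apply_add_single (·!), ← mul_prod_erase univ (fun r => (p r)!) (mem_univ i),
    Nat.factorial_succ, mul_assoc]

lemma derivative_hermiteProd (p : ι → ℕ) :
    derivative (hermiteProd p) = ∑ s, p s • hermiteProd (p - Pi.single s 1) := by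
  rw [hermiteProd, derivative_prod_finset]
  refine sum_congr rfl fun s _ => ?_
  rw [hermiteProd, prod_apply_sub_single, derivative_hermite, mul_smul_comm, mul_comm]

lemma gaussianExpectation_hermiteProd_add_single (p : ι → ℕ) (i : ι) :
    gaussianExpectation (hermiteProd (p + Pi.single i 1))
      = ∑ s ∈ univ.erase i, p s • gaussianExpectation (hermiteProd (p - Pi.single s 1)) := by
  rw [hermiteProd_add_single, map_sub, gaussianExpectation_X_mul, derivative_hermiteProd,
    map_sum, ← add_sum_erase _ _ (mem_univ i), map_nsmul, add_sub_cancel_left]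
  simp only [map_nsmul]

theorem eq_of_recurrence {M : Type*} [AddCommMonoid M] {F G : (ι → ℕ) → M} (h0 : F 0 = G 0)
    (hF : ∀ (p : ι → ℕ) i,
      F (p + Pi.single i 1) = ∑ s ∈ univ.erase i, p s • F (p - Pi.single s 1))
    (hG : ∀ (p : ι → ℕ) i,
      G (p + Pi.single i 1) = ∑ s ∈ univ.erase i, p s • G (p - Pi.single s 1))
    (q : ι → ℕ) : F q = G q := by
  induction hN : ∑ r, q r using Nat.strong_induction_on generalizing q with
  | _ N ih =>
  rcases eq_or_ne q 0 with rfl | hq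
  · exact h0
  obtain ⟨i, hi⟩ := Function.ne_iff.1 hq
  obtain ⟨p, rfl⟩ := exists_eq_add_single hi
  have hlt (s : ι) : ∑ r, (p - Pi.single s 1 : ι → ℕ) r < N := by
    have hle : ∑ r, (p - Pi.single s 1 : ι → ℕ) r ≤ ∑ r, p r :=
      sum_le_sum fun r _ => tsub_le_self
    rw [Pi.add_def, sum_add_distrib, Fintype.sum_pi_single'] at hN
    omega
  rw [hF, hG]
  exact sum_congr rfl fun s _ => by rw [ih _ (hlt s) _ rfl]

end MultiIndex

section Diagrams

variable {n : ℕ}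

lemma le_of_memA {q : Fin n → ℕ} {k : Fin n → Fin n → ℕ} (hk : memA q k) (a b : Fin n) :
    k a b ≤ q a :=
  hk.2.2 a ▸ single_le_sum (fun _ _ => Nat.zero_le _) (mem_univ b)

open scoped Classical in
def diagrams (q : Fin n → ℕ) : Finset (Fin n → Fin n → ℕ) :=
  (Fintype.piFinset fun a => Fintype.piFinset fun _ => range (q a + 1)).filter (memA q)

lemma mem_diagrams {q : Fin n → ℕ} {k : Fin n → Fin n → ℕ} :
    k ∈ diagrams q ↔ memA q k := by
  simp only [diagrams, mem_filter, Fintype.mem_piFinset, mem_range, and_iff_right_iff_imp]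
  exact fun hk a b => Nat.lt_succ_of_le (le_of_memA hk a b)

lemma tsum_memA_eq_sum_diagrams (q : Fin n → ℕ) (f : (Fin n → Fin n → ℕ) → ℝ) :
    ∑' κ : {k // memA q k}, f κ.1 = ∑ k ∈ diagrams q, f k := by
  rw [← Finset.tsum_subtype]
  exact (Equiv.subtypeEquivRight fun k => mem_diagrams.symm).tsum_eq (f ∘ Subtype.val)

def diagramWeight (k : Fin n → Fin n → ℕ) : ℝ :=
  ∏ p ∈ univ.filter (fun p : Fin n × Fin n => p.1 < p.2), 1 / ((k p.1 p.2)! : ℝ)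

def singleEdge (i s : Fin n) : Fin n → Fin n → ℕ :=
  Pi.single i (Pi.single s 1) + Pi.single s (Pi.single i 1)

lemma singleEdge_apply (i s a b : Fin n) :
    singleEdge i s a b
      = (if a = i ∧ b = s then 1 else 0) + (if a = s ∧ b = i then 1 else 0) := by
  simp only [singleEdge, Pi.add_apply, Pi.single_apply]
  split_ifs <;> simp_all

lemma singleEdge_comm (i s : Fin n) : singleEdge i s = singleEdge s i :=
  add_comm _ _

lemma memA_singleEdge {i s : Fin n} (hne : i ≠ s) :
    memA (Pi.single i 1 + Pi.single s 1) (singleEdge i s) := by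
  refine ⟨fun a => ?_, fun a b => ?_, fun a => ?_⟩
  · rw [singleEdge_apply]; grind
  · rw [singleEdge_apply, singleEdge_apply]; grind
  · simp only [singleEdge, Pi.add_apply, sum_add_distrib, Pi.single_apply]
    split_ifs <;> simp

lemma memA_add_iff {q r : Fin n → ℕ} {k E : Fin n → Fin n → ℕ} (hE : memA r E) :
    memA (q + r) (k + E) ↔ memA q k := by
  obtain ⟨hdiag, hsymm, hrow⟩ := hE
  simp only [memA, Pi.add_apply, sum_add_distrib, hdiag, hrow, add_zero, add_left_inj]
  refine and_congr_right fun _ => and_congr_left fun _ => forall₂_congr fun a b => ?_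
  rw [hsymm a b, add_left_inj]

lemma singleEdge_le {i s : Fin n} {k : Fin n → Fin n → ℕ} (hne : i ≠ s)
    (hk : ∀ a b, k a b = k b a) (his : k i s ≠ 0) : singleEdge i s ≤ k := by
  intro a b
  rw [singleEdge_apply]
  have hsi : k s i ≠ 0 := hk s i ▸ his
  split_ifs <;> grind

lemma diagramWeight_add_singleEdge {i s : Fin n} {k : Fin n → Fin n → ℕ} (hne : i ≠ s)
    (hk : ∀ a b, k a b = k b a) :
    (k i s + 1 : ℝ) * diagramWeight (k + singleEdge i s) = diagramWeight k := by
  wlog hlt : i < s generalizing i s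
  · simpa [singleEdge_comm, hk s i] using
      this hne.symm (lt_of_le_of_ne (not_lt.1 hlt) hne.symm)
  have hmem : (i, s) ∈ univ.filter (fun p : Fin n × Fin n => p.1 < p.2) := by simpa using hlt
  have hrest : ∀ p ∈ (univ.filter (fun p : Fin n × Fin n => p.1 < p.2)).erase (i, s),
      (k + singleEdge i s) p.1 p.2 = k p.1 p.2 := by
    intro p hp
    obtain ⟨hne', hp⟩ := mem_erase.1 hp
    have hp12 : p.1 < p.2 := (mem_filter.1 hp).2
    rw [Pi.add_apply, Pi.add_apply, singleEdge_apply]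
    split_ifs <;> grind
  unfold diagramWeight
  rw [← mul_prod_erase _ _ hmem, ← mul_prod_erase _ _ hmem, prod_congr rfl fun p hp => by
    rw [hrest p hp]]
  simp only [Pi.add_apply, singleEdge_apply, and_self, ↓reduceIte, hne, false_and, add_zero,
    Nat.factorial_succ, Nat.cast_mul, Nat.cast_add, Nat.cast_one, one_div, mul_inv_rev,
    prod_inv_distrib]
  field_simp

lemma sum_diagrams_mul_diagramWeight {i s : Fin n} (hne : i ≠ s) (r : Fin n → ℕ) :
    ∑ k ∈ diagrams (r + (Pi.single i 1 + Pi.single s 1)), (k i s : ℝ) * diagramWeight k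
      = ∑ k ∈ diagrams r, diagramWeight k := by
  classical
  have hE := memA_singleEdge hne
  rw [← sum_filter_of_ne (p := fun k => singleEdge i s ≤ k) fun k hk hk0 =>
    singleEdge_le hne (mem_diagrams.1 hk).2.1 fun h => by simp [h] at hk0]
  symm
  refine sum_nbij' (· + singleEdge i s) (· - singleEdge i s) (fun k hk => ?_) (fun k hk => ?_)
    (fun k _ => add_tsub_cancel_right k _) (fun k hk => tsub_add_cancel_of_le (mem_filter.1 hk).2)
    (fun k hk => ?_)
  · exact mem_filter.2 ⟨mem_diagrams.2 ((memA_add_iff hE).2 (mem_diagrams.1 hk)), le_add_self⟩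
  · obtain ⟨hk, hle⟩ := mem_filter.1 hk
    rw [mem_diagrams, ← memA_add_iff hE, tsub_add_cancel_of_le hle]
    exact mem_diagrams.1 hk
  · rw [← diagramWeight_add_singleEdge hne (mem_diagrams.1 hk).2.1]
    simp [singleEdge_apply, hne]

lemma mul_sum_diagrams (q : Fin n → ℕ) (i : Fin n) :
    (q i : ℝ) * ∑ k ∈ diagrams q, diagramWeight k
      = ∑ s ∈ univ.erase i, ∑ k ∈ diagrams q, (k i s : ℝ) * diagramWeight k := by
  rw [mul_sum, sum_comm]
  refine sum_congr rfl fun k hk => ?_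
  obtain ⟨hdiag, -, hrow⟩ := mem_diagrams.1 hk
  rw [← sum_mul, ← Nat.cast_sum, sum_erase _ (hdiag i), hrow]

def diagramSum (q : Fin n → ℕ) : ℝ :=
  (∏ r, ((q r)! : ℝ)) * ∑ k ∈ diagrams q, diagramWeight k

lemma diagramSum_zero : diagramSum (0 : Fin n → ℕ) = 1 := by
  have h : diagrams (0 : Fin n → ℕ) = {0} := by
    ext k
    rw [mem_diagrams, mem_singleton]
    refine ⟨fun hk => funext₂ fun a b => Nat.le_zero.1 (le_of_memA hk a b), ?_⟩
    rintro rfl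
    exact ⟨fun _ => rfl, fun _ _ => rfl, fun _ => by simp⟩
  simp [diagramSum, h, diagramWeight]

lemma diagramSum_add_single (p : Fin n → ℕ) (i : Fin n) :
    diagramSum (p + Pi.single i 1)
      = ∑ s ∈ univ.erase i, p s • diagramSum (p - Pi.single s 1) := by
  have hterm (s : Fin n) (hs : s ∈ univ.erase i) :
      (∏ r, ((p r)! : ℝ))
          * ∑ k ∈ diagrams (p + Pi.single i 1), (k i s : ℝ) * diagramWeight k
        = p s • diagramSum (p - Pi.single s 1) := by
    have hsi := ne_of_mem_erase hs
    rcases eq_or_ne (p s) 0 with hps | hps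
    · rw [hps, zero_smul]
      refine mul_eq_zero_of_right _ (sum_eq_zero fun k hk => ?_)
      have hk := mem_diagrams.1 hk
      have hks : k i s = 0 := by simpa [hk.2.1 i s, hsi, hps] using le_of_memA hk s i
      simp [hks]
    · obtain ⟨r, rfl⟩ := exists_eq_add_single hps
      rw [add_tsub_cancel_right, add_assoc, add_comm (Pi.single s 1),
        sum_diagrams_mul_diagramWeight hsi.symm, diagramSum, ← Nat.cast_prod,
        prod_factorial_add_single, nsmul_eq_mul]
      simp only [Nat.cast_mul, Nat.cast_add, Nat.cast_one, Nat.cast_prod, Pi.add_apply,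
        Pi.single_eq_same]
      ring
  calc diagramSum (p + Pi.single i 1)
      = (∏ r, ((p r)! : ℝ)) * (((p + Pi.single i 1 : Fin n → ℕ) i : ℝ)
          * ∑ k ∈ diagrams (p + Pi.single i 1), diagramWeight k) := by
        rw [diagramSum, ← Nat.cast_prod, prod_factorial_add_single]
        simp only [Nat.cast_mul, Nat.cast_add, Nat.cast_one, Nat.cast_prod, Pi.add_apply,
          Pi.single_eq_same]
        ring
    _ = _ := by rw [mul_sum_diagrams, mul_sum]; exact sum_congr rfl hterm

end Diagrams

end DiagramFormula

open DiagramFormula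

theorem stmt_6_general (n : ℕ) (q : Fin n → ℕ) :
    (∫ z, ∏ r, Hval (q r) z ∂(gaussianReal 0 1)) =
      (∏ r, (Nat.factorial (q r) : ℝ)) *
        ∑' κ : {k : Fin n → Fin n → ℕ // memA q k},
          ∏ p ∈ Finset.univ.filter (fun p : Fin n × Fin n => p.1 < p.2),
            (1 : ℝ) / (Nat.factorial (κ.1 p.1 p.2) : ℝ) := by
  calc (∫ z, ∏ r, Hval (q r) z ∂(gaussianReal 0 1))
      = gaussianExpectation (hermiteProd q) := by
        simp [gaussianExpectation_apply, hermiteProd, Hval, map_prod]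
    _ = diagramSum q :=
        eq_of_recurrence (F := fun q => gaussianExpectation (hermiteProd q))
          (by simp [hermiteProd, gaussianExpectation_one, diagramSum_zero])
          gaussianExpectation_hermiteProd_add_single diagramSum_add_single q
    _ = _ := by rw [diagramSum, ← tsum_memA_eq_sum_diagrams]; rfl

/-- Diagram formula for a single standard Gaussian `Z`:
`E[∏_{r=1}^n H_{q_r}(Z)] = ∏ q_r! · Σ_{κ ∈ A_{q₁,…,qₙ}} ∏_{i<j} 1/k_ij!`. -/
theorem stmt_6 (n : ℕ) (hn : 2 ≤ n) (q : Fin n → ℕ) :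
    (∫ z, ∏ r, Hval (q r) z ∂(gaussianReal 0 1)) =
      (∏ r, (Nat.factorial (q r) : ℝ)) *
        ∑' κ : {k : Fin n → Fin n → ℕ // memA q k},
          ∏ p ∈ Finset.univ.filter (fun p : Fin n × Fin n => p.1 < p.2),
            (1 : ℝ) / (Nat.factorial (κ.1 p.1 p.2) : ℝ) :=
  stmt_6_general n q
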